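/- Let p be an odd integer, p ≥ 3, and r an integer with |r| < p and gcd(r,p) = 1, and define V(x) = (px+r)/2 for x odd, V(x) = x/2 for x even. If there exist an odd integer l, integers α ≥ 0, β ≥ 1, and k ≥ 1 not divisible by 2 or p, such that V(p^α 2^β k − l) = p^{α+1} 2^{β-1} k − l, then r = (p−2)l; consequently, since |r| < p, r = p−2 or r = 2−p. -/

import Mathlib

/-!
On an odd argument `x` the map is `x ↦ (p x + r) / 2`, and `p x + r` is even, so the hypothesis is
the exact identity `p (p^α 2^β k - l) + r = 2 (p^(α+1) 2^(β-1) k - l)`. The `k`-terms cancel because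
`β ≥ 1`, leaving `r = (p - 2) l`. Then `l` is odd and `(p - 2) |l| < p ≤ 3 (p - 2)`, so `l = ±1`.
-/

lemma two_mul_ite_ediv_two_of_odd {p r x : ℤ} (hp : Odd p) (hr : Odd r) (hx : Odd x) :
    2 * (if x % 2 = 0 then x / 2 else (p * x + r) / 2) = p * x + r := by
  rw [if_neg (by rw [Int.odd_iff.mp hx]; decide)]
  exact Int.two_mul_ediv_two_of_even ((hp.mul hx).add_odd hr)

lemma eq_sub_two_mul_of_step {R : Type*} [CommRing R] {p r l k : R} {α β : ℕ} (hβ : 1 ≤ β)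
    (h : p * (p ^ α * 2 ^ β * k - l) + r = 2 * (p ^ (α + 1) * 2 ^ (β - 1) * k - l)) :
    r = (p - 2) * l := by
  obtain ⟨γ, rfl⟩ := Nat.exists_eq_add_of_le' hβ
  rw [Nat.add_sub_cancel] at h
  linear_combination h

lemma eq_one_or_eq_neg_one_of_abs_sub_two_mul_lt {p l : ℤ} (hp : 3 ≤ p) (hl : Odd l)
    (h : |(p - 2) * l| < p) : l = 1 ∨ l = -1 := by
  rw [abs_mul, abs_of_pos (by omega : 0 < p - 2)] at h
  have hl_lt : |l| < 3 := by
    by_contra! h3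
    nlinarith
  obtain ⟨m, rfl⟩ := hl
  rw [abs_lt] at hl_lt
  omega

theorem chain_structure_forces_r_general (p r : ℤ) (hp : 3 ≤ p) (hpodd : Odd p)
    (hr : |r| < p) (hrodd : Odd r)
    (l k : ℤ) (α β : ℕ) (hβ : 1 ≤ β)
    (hoddarg : Odd (p ^ α * 2 ^ β * k - l))
    (heq : (fun x : ℤ => if x % 2 = 0 then x / 2 else (p * x + r) / 2)
        (p ^ α * 2 ^ β * k - l) = p ^ (α + 1) * 2 ^ (β - 1) * k - l) :
    r = (p - 2) * l ∧ (r = p - 2 ∨ r = 2 - p) := by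
  have hstep := two_mul_ite_ediv_two_of_odd hpodd hrodd hoddarg
  beta_reduce at heq
  rw [heq] at hstep
  have hrl : r = (p - 2) * l := eq_sub_two_mul_of_step hβ hstep.symm
  have hl : Odd l := Int.Odd.of_mul_right (hrl ▸ hrodd)
  refine ⟨hrl, ?_⟩
  rcases eq_one_or_eq_neg_one_of_abs_sub_two_mul_lt hp hl (hrl ▸ hr) with rfl | rfl
  · left; linarith
  · right; linarith

theorem chain_structure_forces_r (p r : ℤ) (hp : 3 ≤ p) (hpodd : Odd p)
    (hr : |r| < p) (hrodd : Odd r) (hcop : IsCoprime r p)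
    (l k : ℤ) (α β : ℕ) (hβ : 1 ≤ β) (hl : Odd l) (hk : 1 ≤ k)
    (hk2 : ¬ (2 : ℤ) ∣ k) (hkp : ¬ p ∣ k)
    (hposarg : 0 < p ^ α * 2 ^ β * k - l) (hoddarg : Odd (p ^ α * 2 ^ β * k - l))
    (heq : (fun x : ℤ => if x % 2 = 0 then x / 2 else (p * x + r) / 2)
        (p ^ α * 2 ^ β * k - l) = p ^ (α + 1) * 2 ^ (β - 1) * k - l) :
    r = (p - 2) * l ∧ (r = p - 2 ∨ r = 2 - p) :=
  chain_structure_forces_r_general p r hp hpodd hr hrodd l k α β hβ hoddarg heq
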